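/- In the transition system of a finite-state PAFAS_s process, an infinite run contains infinitely many 1-steps if and only if it eventually enters and traverses, infinitely often, cycles each containing at least one 1-step; hence a finite-state request-response process has a fair trace with only finitely many out-actions and at least one pending in-action if and only if its reduced transition system contains a catastrophic cycle, i.e., a reachable cycle containing at least one 1-step but no in- or out-transition. -/

import Mathlib

/-!
Forward: after the last in- or out-step a fair run still makes infinitely many 1-steps, and
since there are only finitely many states, two of them start in the same state. The segment
of the run between them is a catastrophic cycle, and the prefix up to it contains the first
in-step if the threshold is chosen beyond it. Backward: run the prefix once and then the
cycle forever (a lasso); its labels repeat with the period of the cycle.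
-/

/-- Edge labels of the abstract transition system of a request-response
process: request `inA`, response `outA`, internal `tau`, 1-step `one`. -/
inductive Lab where
  | inA | outA | tau | one
deriving DecidableEq

theorem Set.Infinite.exists_ge_lt_map_eq {α : Type*} [Finite α] {S : Set ℕ} (hS : S.Infinite)
    (f : ℕ → α) (N : ℕ) : ∃ a ∈ S, ∃ b, N ≤ a ∧ a < b ∧ f a = f b := by
  obtain ⟨a, ⟨haS, haN⟩, b, -, hab, hf⟩ :=
    (hS.sdiff (Set.finite_Iio N)).exists_lt_map_eq_of_mapsTo (Set.mapsTo_univ f _) Set.finite_univ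
  exact ⟨a, haS, b, not_lt.1 haN, hab, hf⟩

section Lasso

variable {α β : Type*} {p g : ℕ → α} {m n i : ℕ}

def lasso (p g : ℕ → α) (m n : ℕ) (i : ℕ) : α :=
  if i < m then p i else g ((i - m) % n)

theorem lasso_of_lt (h : i < m) : lasso p g m n i = p i := if_pos h

theorem lasso_of_le (h : m ≤ i) : lasso p g m n i = g ((i - m) % n) := if_neg (not_lt.2 h)

theorem lasso_add (j : ℕ) : lasso p g m n (m + j) = g (j % n) := by
  rw [lasso_of_le (Nat.le_add_right m j), Nat.add_sub_cancel_left]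

theorem lasso_self : lasso p g m n m = g 0 := by
  simpa using lasso_add (p := p) (g := g) (m := m) (n := n) 0

theorem lasso_zero (hpg : p m = g 0) : lasso p g m n 0 = p 0 := by
  rcases Nat.eq_zero_or_pos m with rfl | hm
  · rw [lasso_self, hpg]
  · exact lasso_of_lt hm

theorem infinite_setOf_lasso_eq {j : ℕ} (hj : j < n) : {i | lasso p g m n i = g j}.Infinite := by
  refine Set.infinite_of_forall_exists_gt fun a => ⟨m + (j + n * (a + 1)), ?_, ?_⟩
  · show lasso p g m n _ = g j
    rw [lasso_add, Nat.add_mul_mod_self_left, Nat.mod_eq_of_lt hj]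
  · have := Nat.le_mul_of_pos_left (a + 1) (show 0 < n by omega)
    omega

theorem finite_setOf_lasso {P : α → Prop} (hn : 0 < n) (hg : ∀ j < n, ¬ P (g j)) :
    {i | P (lasso p g m n i)}.Finite :=
  (Set.finite_Iio m).subset fun i (hi : P (lasso p g m n i)) => by
    by_contra him
    rw [lasso_of_le (not_lt.1 him)] at hi
    exact hg _ (Nat.mod_lt _ hn) hi

variable {R : α → β → α → Prop} {lp lg : ℕ → β}

theorem cycle_step_mod (hn : 0 < n) (hg : g n = g 0) (hgR : ∀ i < n, R (g i) (lg i) (g (i + 1)))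
    (j : ℕ) : R (g (j % n)) (lg (j % n)) (g ((j + 1) % n)) := by
  have hj : j % n < n := Nat.mod_lt j hn
  have hnext : g ((j + 1) % n) = g (j % n + 1) := by
    rw [← Nat.mod_add_mod]
    rcases Nat.lt_or_eq_of_le (show j % n + 1 ≤ n from hj) with h | h
    · rw [Nat.mod_eq_of_lt h]
    · rw [h, Nat.mod_self, hg]
  rw [hnext]
  exact hgR _ hj

theorem lasso_step (hn : 0 < n) (hpg : p m = g 0) (hg : g n = g 0)
    (hpR : ∀ i < m, R (p i) (lp i) (p (i + 1))) (hgR : ∀ i < n, R (g i) (lg i) (g (i + 1)))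
    (i : ℕ) : R (lasso p g m n i) (lasso lp lg m n i) (lasso p g m n (i + 1)) := by
  rcases lt_or_ge i m with hi | hi
  · rw [lasso_of_lt hi, lasso_of_lt hi]
    rcases Nat.lt_or_ge (i + 1) m with hi' | hi'
    · rw [lasso_of_lt hi']
      exact hpR i hi
    · obtain rfl : i + 1 = m := by omega
      rw [lasso_self, ← hpg]
      exact hpR i hi
  · obtain ⟨j, rfl⟩ := Nat.exists_eq_add_of_le hi
    rw [add_assoc, lasso_add, lasso_add, lasso_add]
    exact cycle_step_mod hn hg hgR j

end Lasso

/-- in the finite transition system of a request-response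
process, a fair run (infinitely many 1-steps) with only finitely many
out-actions and at least one pending in-action — i.e. with finitely many
in/out edges and at least one in edge — exists from the initial state iff some
catastrophic cycle (a reachable cycle with a 1-step edge but no in- or
out-edge) is reachable via a path performing an in-action. -/
theorem liveness_violation_iff_catastrophic_cycle {V : Type} [Fintype V]
    (E : V → Lab → V → Prop) (v0 : V) :
    (∃ (f : ℕ → V) (ℓ : ℕ → Lab), f 0 = v0 ∧
      (∀ n, E (f n) (ℓ n) (f (n + 1))) ∧
      {n | ℓ n = Lab.one}.Infinite ∧
      {n | ℓ n = Lab.inA ∨ ℓ n = Lab.outA}.Finite ∧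
      (∃ n, ℓ n = Lab.inA)) ↔
    (∃ (c : V) (m : ℕ) (p : ℕ → V) (lp : ℕ → Lab),
      p 0 = v0 ∧ p m = c ∧ (∀ i < m, E (p i) (lp i) (p (i + 1))) ∧
      (∃ i < m, lp i = Lab.inA) ∧
      (∃ (n : ℕ) (g : ℕ → V) (ℓ : ℕ → Lab), 0 < n ∧ g 0 = c ∧ g n = c ∧
        (∀ i < n, E (g i) (ℓ i) (g (i + 1)) ∧ ℓ i ≠ Lab.inA ∧ ℓ i ≠ Lab.outA) ∧
        (∃ i < n, ℓ i = Lab.one))) := by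
  constructor
  · rintro ⟨f, ℓ, hf0, hstep, hone, hfin, n0, hn0⟩
    obtain ⟨B, hB⟩ := hfin.bddAbove
    obtain ⟨a, hone_a, b, hBa, hab, hfab⟩ := hone.exists_ge_lt_map_eq f (B + n0 + 1)
    refine ⟨f a, a, f, ℓ, hf0, rfl, fun i _ => hstep i, ⟨n0, by omega, hn0⟩,
      b - a, fun i => f (a + i), fun i => ℓ (a + i), by omega, rfl, ?_,
      fun i _ => ⟨hstep _, fun h => ?_, fun h => ?_⟩, ⟨0, by omega, hone_a⟩⟩
    · show f (a + (b - a)) = f a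
      rw [Nat.add_sub_cancel' hab.le, hfab]
    · exact absurd (hB (Or.inl h)) (by omega)
    · exact absurd (hB (Or.inr h)) (by omega)
  · rintro ⟨c, m, p, lp, hp0, rfl, hpE, ⟨i0, hi0m, hi0⟩,
      n, g, ℓ, hn, hg0, hgn, hgE, j0, hj0n, hj0⟩
    refine ⟨lasso p g m n, lasso lp ℓ m n, (lasso_zero hg0.symm).trans hp0,
      lasso_step hn hg0.symm (hgn.trans hg0.symm) hpE fun i hi => (hgE i hi).1, ?_,
      finite_setOf_lasso (P := fun l => l = Lab.inA ∨ l = Lab.outA) hn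
        fun j hj h => h.elim (hgE j hj).2.1 (hgE j hj).2.2,
      ⟨i0, (lasso_of_lt hi0m).trans hi0⟩⟩
    rw [← hj0]
    exact infinite_setOf_lasso_eq hj0n
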